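/- arXiv:2010.03301 — 2 statements merged into one kernel-verified Lean document; each statement's English description precedes it below -/
import Mathlib

section
/- Let T be a pretriangulated category, N an integer, and X --u--> Y --b--> C --w--> X[1] a distinguished triangle. Suppose there exists a morphism v: Y → X with v∘u = N·id_X and u∘v = N·id_Y. Then N²·id_C = 0; in particular every homological functor from T to an abelian category kills C up to N²-torsion, i.e. N²·H(C) = 0 for every homological functor H. -/
open CategoryTheory CategoryTheory.Limits CategoryTheory.Pretriangulated

/-- Let `X --u--> Y --b--> Z --w--> X[1]` be a distinguished triangle in a
pretriangulated category, `N : ℤ`, and suppose there is `v : Y ⟶ X` with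
`v ∘ u = N • id_X` and `u ∘ v = N • id_Y`. Then `N² • id_Z = 0`; in particular,
every homological functor `H` to an abelian category kills `Z` up to `N²`-torsion:
`N² • id_{H(Z)} = 0`. -/
theorem sq_smul_id_cone_eq_zero
    {C : Type*} [Category C] [Preadditive C] [HasZeroObject C] [HasShift C ℤ]
    [∀ n : ℤ, (CategoryTheory.shiftFunctor C n).Additive] [Pretriangulated C]
    (N : ℤ) (T : Triangle C) (hT : T ∈ distTriang C)
    (v : T.obj₂ ⟶ T.obj₁)
    (hvu : T.mor₁ ≫ v = N • 𝟙 T.obj₁)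
    (huv : v ≫ T.mor₁ = N • 𝟙 T.obj₂) :
    (N ^ 2 • 𝟙 T.obj₃ = 0) ∧
    (∀ {A : Type*} [Category A] [Abelian A] (H : C ⥤ A) [H.IsHomological],
      N ^ 2 • 𝟙 (H.obj T.obj₃) = 0) := by
  have hmor₂ : N • T.mor₂ = 0 := by
    calc N • T.mor₂ = (N • 𝟙 T.obj₂) ≫ T.mor₂ := by simp
    _ = v ≫ (T.mor₁ ≫ T.mor₂) := by rw [← huv, Category.assoc]
    _ = 0 := by rw [comp_distTriang_mor_zero₁₂ T hT, Limits.comp_zero]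
  have hmor₃ : (N • 𝟙 T.obj₃) ≫ T.mor₃ = 0 := by
    have : N • T.mor₃ = 0 := by
      calc N • T.mor₃ = T.mor₃ ≫ ((N • 𝟙 T.obj₁)⟦(1:ℤ)⟧') := by
            simp
      _ = T.mor₃ ≫ (T.mor₁ ≫ v)⟦(1:ℤ)⟧' := by rw [hvu]
      _ = (T.mor₃ ≫ T.mor₁⟦(1:ℤ)⟧') ≫ v⟦(1:ℤ)⟧' := by
            rw [Functor.map_comp, Category.assoc]
      _ = 0 := by rw [comp_distTriang_mor_zero₃₁ T hT, Limits.zero_comp]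
    simpa using this
  obtain ⟨g, hg⟩ := Triangle.coyoneda_exact₃ T hT (N • 𝟙 T.obj₃) hmor₃
  have hmain : N ^ 2 • 𝟙 T.obj₃ = 0 := by
    have : N ^ 2 • 𝟙 T.obj₃ = g ≫ (N • T.mor₂) := by
      rw [Preadditive.comp_zsmul, ← hg, smul_smul, sq]
    rw [this, hmor₂, Limits.comp_zero]
  refine ⟨hmain, ?_⟩
  intro A _ _ H _
  have := congrArg H.map hmain
  simpa [Functor.map_zsmul] using this
end

section
/- Let R be a commutative ring, A a commutative R-algebra, and I ⊆ A an ideal such that the quotient R-algebra A/I is formally smooth over R. Then there exists an R-algebra homomorphism s: A/I → lim_n A/I^n into the I-adic completion of A such that the composition of s with the canonical projection lim_n A/I^n → A/I is the identity of A/I; i.e. the canonical surjection from the I-adic completion onto A/I admits an R-algebra section. -/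
/-- Let `R` be a commutative ring, `A` a commutative `R`-algebra and `I ⊆ A` an ideal
such that `A ⧸ I` is formally smooth over `R`. Then the canonical surjection from the
`I`-adic completion `lim_n A ⧸ Iⁿ` of `A` onto `A ⧸ I` admits an `R`-algebra section:
there is an `R`-algebra homomorphism `s : A ⧸ I → lim_n A ⧸ Iⁿ` whose composition with
the canonical projection is the identity of `A ⧸ I`. -/
theorem formallySmooth_section_of_adicCompletion
    {R A : Type u} [CommRing R] [CommRing A] [Algebra R A] (I : Ideal A)
    [Algebra.FormallySmooth R (A ⧸ I)] :
    letI : Algebra R (AdicCompletion I A) :=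
      ((algebraMap A (AdicCompletion I A)).comp (algebraMap R A)).toAlgebra
    ∃ s : (A ⧸ I) →ₐ[R] AdicCompletion I A,
      ∀ x : A ⧸ I,
        Ideal.Quotient.factor (S := I ^ 1) (T := I) (pow_one I).le
          (AdicCompletion.evalₐ I 1 (s x)) = x := by
  obtain ⟨s, hs⟩ :=
    Algebra.FormallySmooth.exists_adicCompletionEvalOneₐ_comp_eq (AlgHom.id R (A ⧸ I))
  -- The `R`-algebra structure of the statement has the same `algebraMap` as Mathlib's instance
  -- but a different scalar action, so `s` is rebuilt from its underlying ring map.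
  exact ⟨@AlgHom.mk _ _ _ _ _ _ _ (_) s.toRingHom s.commutes, fun x => congr($hs x)⟩
end
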